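/- arXiv:1603.08901 — 6 statements merged into one kernel-verified Lean document; each statement's English description precedes it below -/
import Mathlib

section
/- The only solutions in rational numbers z, y to the equation (2z+1)(z²+z+1) = y³ are (z, y) = (−1/2, 0), (0, 1) and (−1, −1). -/
/-- The only rational solutions to `(2z+1)(z²+z+1) = y³` are
`(z, y) = (-1/2, 0)`, `(0, 1)` and `(-1, -1)`. -/
theorem rational_points_genus_one_curve (z y : ℚ) :
    (2 * z + 1) * (z ^ 2 + z + 1) = y ^ 3 ↔
      (z = -1/2 ∧ y = 0) ∨ (z = 0 ∧ y = 1) ∨ (z = -1 ∧ y = -1) := by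
  constructor
  · intro h
    have key : z ^ 3 + (z + 1) ^ 3 = y ^ 3 := by ring_nf; ring_nf at h; linarith
    have flt : FermatLastTheoremWith ℚ 3 :=
      fermatLastTheoremFor_iff_rat.mp fermatLastTheoremThree
    by_cases hz : z = 0
    · subst hz
      have : y ^ 3 = 1 ^ 3 := by linarith
      have hy : y = 1 := by
        nlinarith [sq_nonneg (y - 1), sq_nonneg (y + 1), sq_nonneg y]
      exact Or.inr (Or.inl ⟨rfl, hy⟩)
    by_cases hz1 : z + 1 = 0
    · have hzv : z = -1 := by linarith
      subst hzv
      have : y ^ 3 = (-1 : ℚ) ^ 3 := by linarith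
      have hy : y = -1 := by
        nlinarith [sq_nonneg (y - 1), sq_nonneg (y + 1), sq_nonneg y]
      exact Or.inr (Or.inr ⟨rfl, hy⟩)
    by_cases hy : y = 0
    · subst hy
      have : z ^ 3 = -((z + 1) ^ 3) := by linarith
      have h2 : z ^ 3 = (-(z + 1)) ^ 3 := by ring_nf; linarith
      have hzz : z = -(z + 1) := by
        nlinarith [sq_nonneg (z + (z + 1)), sq_nonneg (z - (z+1)), sq_nonneg z, sq_nonneg (z+1)]
      left
      constructor
      · linarith
      · rfl
    · exact absurd key (flt z (z + 1) y hz hz1 hy)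
  · rintro (⟨hz, hy⟩ | ⟨hz, hy⟩ | ⟨hz, hy⟩) <;> subst hz <;> subst hy <;> norm_num
end

section
/- Let v be a positive integer with v ≡ 2 (mod 6) or v ≡ 4 (mod 6). Then 6 divides both v⁵ + v³ − 2v and v⁴ − 3v³ − 2v² − 2, and the following identity of Pagliani holds: ((v⁵ + v³ − 2v)/6)³ = Σ_{i=1}^{v³} ((v⁴ − 3v³ − 2v² − 2)/6 + i)³. In other words, the cube of (v⁵+v³−2v)/6 is a sum of v³ consecutive integer cubes. -/
lemma pagliani_sum_cubes (c : ℤ) (n : ℕ) :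
    4 * ∑ i ∈ Finset.range n, (c + ((i : ℤ) + 1)) ^ 3 =
      (c + n) ^ 2 * (c + n + 1) ^ 2 - c ^ 2 * (c + 1) ^ 2 := by
  induction n with
  | zero => simp
  | succ m ih =>
    rw [Finset.sum_range_succ, mul_add, ih]
    push_cast
    ring

/-- Pagliani's parametric family: for a positive integer `v ≡ 2` or `4 (mod 6)`,
`6` divides both `v⁵ + v³ − 2v` and `v⁴ − 3v³ − 2v² − 2`, and
`((v⁵ + v³ − 2v)/6)³ = Σ_{i=1}^{v³} ((v⁴ − 3v³ − 2v² − 2)/6 + i)³`;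
that is, the cube of `(v⁵+v³−2v)/6` is a sum of `v³` consecutive integer cubes. -/
theorem pagliani_identity (v : ℕ) (hv : 0 < v) (hmod : v % 6 = 2 ∨ v % 6 = 4) :
    (6 : ℤ) ∣ ((v : ℤ) ^ 5 + (v : ℤ) ^ 3 - 2 * v) ∧
    (6 : ℤ) ∣ ((v : ℤ) ^ 4 - 3 * (v : ℤ) ^ 3 - 2 * (v : ℤ) ^ 2 - 2) ∧
    (((v : ℤ) ^ 5 + (v : ℤ) ^ 3 - 2 * v) / 6) ^ 3 =
      ∑ i ∈ Finset.range (v ^ 3),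
        (((v : ℤ) ^ 4 - 3 * (v : ℤ) ^ 3 - 2 * (v : ℤ) ^ 2 - 2) / 6 + ((i : ℤ) + 1)) ^ 3 := by
  rcases hmod with h | h
  · obtain ⟨k, rfl⟩ : ∃ k, v = 6 * k + 2 := ⟨v / 6, by omega⟩
    have ha : ((6 * k + 2 : ℕ) : ℤ) ^ 5 + ((6 * k + 2 : ℕ) : ℤ) ^ 3
        - 2 * ((6 * k + 2 : ℕ) : ℤ) =
        6 * (1296 * (k : ℤ) ^ 5 + 2160 * (k : ℤ) ^ 4 + 1476 * (k : ℤ) ^ 3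
          + 516 * (k : ℤ) ^ 2 + 90 * (k : ℤ) + 6) := by push_cast; ring
    have hb : ((6 * k + 2 : ℕ) : ℤ) ^ 4 - 3 * ((6 * k + 2 : ℕ) : ℤ) ^ 3
        - 2 * ((6 * k + 2 : ℕ) : ℤ) ^ 2 - 2 =
        6 * (216 * (k : ℤ) ^ 4 + 180 * (k : ℤ) ^ 3 + 24 * (k : ℤ) ^ 2
          - 12 * (k : ℤ) - 3) := by push_cast; ring
    refine ⟨⟨_, ha⟩, ⟨_, hb⟩, ?_⟩
    rw [ha, hb, Int.mul_ediv_cancel_left _ (by norm_num), Int.mul_ediv_cancel_left _ (by norm_num)]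
    apply mul_left_cancel₀ (a := (4 : ℤ)) (by norm_num)
    rw [pagliani_sum_cubes]
    push_cast
    ring
  · obtain ⟨k, rfl⟩ : ∃ k, v = 6 * k + 4 := ⟨v / 6, by omega⟩
    have ha : ((6 * k + 4 : ℕ) : ℤ) ^ 5 + ((6 * k + 4 : ℕ) : ℤ) ^ 3
        - 2 * ((6 * k + 4 : ℕ) : ℤ) =
        6 * (1296 * (k : ℤ) ^ 5 + 4320 * (k : ℤ) ^ 4 + 5796 * (k : ℤ) ^ 3
          + 3912 * (k : ℤ) ^ 2 + 1326 * (k : ℤ) + 180) := by push_cast; ring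
    have hb : ((6 * k + 4 : ℕ) : ℤ) ^ 4 - 3 * ((6 * k + 4 : ℕ) : ℤ) ^ 3
        - 2 * ((6 * k + 4 : ℕ) : ℤ) ^ 2 - 2 =
        6 * (216 * (k : ℤ) ^ 4 + 468 * (k : ℤ) ^ 3 + 348 * (k : ℤ) ^ 2
          + 96 * (k : ℤ) + 5) := by push_cast; ring
    refine ⟨⟨_, ha⟩, ⟨_, hb⟩, ?_⟩
    rw [ha, hb, Int.mul_ediv_cancel_left _ (by norm_num), Int.mul_ediv_cancel_left _ (by norm_num)]
    apply mul_left_cancel₀ (a := (4 : ℤ)) (by norm_num)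
    rw [pagliani_sum_cubes]
    push_cast
    ring
end

section
/- Let d ≥ 3 be an integer and let ℓ ≥ 5 be prime. For each prime q set μ_q = ord_q(d²−1) and ν_q = ord_q(d), and define the finite set T_q ⊂ ℤ² as follows: if q ∤ d(d²−1) then T_q = {(0,0)}; if q = 2 and 2 ∣ d then T_2 = {(0, 1−ν₂)}; if q = 2, 2 ∤ d and μ₂ is even then T_2 = {(1,0), (μ₂/2, 1−μ₂/2), (3−μ₂, μ₂−2)}; if q = 2, 2 ∤ d and μ₂ is odd then T_2 = {(1,0), (3−μ₂, μ₂−2)}; if q is odd and q ∣ d then T_q = {(−ν_q, 0), (0, −ν_q)}; if q is odd and q ∣ (d²−1) then T_q = {(0,0), (−μ_q, μ_q), (μ_q/2, −μ_q/2)} when μ_q is even and T_q = {(0,0), (−μ_q, μ_q)} when μ_q is odd. Suppose x, y are integers with d(2x+d+1)(x² + (d+1)x + d(d+1)/2) = 2yˡ. Then there exist positive rational numbers α, β satisfying (ord_q(α), ord_q(β)) ∈ T_q for every prime q, and rational numbers y₁, y₂, such that 2x+d+1 = α y₁ˡ and x² + (d+1)x + d(d+1)/2 = β y₂ˡ. 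-/
/-!
Write `A = 2x+d+1` and `B = x² + (d+1)x + d(d+1)/2`, so that `4B = A² + (d²-1)` and
`d·A·B = 2yˡ`. Fix a prime `q` and let `a`, `b` be the `q`-adic valuations of `A`, `B`. The
second identity gives `ν_q + a + b ≡ ord_q 2 (mod ℓ)`; by the ultrametric inequality the first
gives `b + 2·ord_q 2 = 2a` if `2a < μ_q` and `= μ_q` if `μ_q < 2a`. Going through the cases
(using `ℓ ∤ 3` when `2a < μ_q`) produces `(t₁, t₂) ∈ T_q` with `a ≡ t₁` and `b ≡ t₂ (mod ℓ)`.
Since `T_q = {(0,0)}` for `q ∤ d(d²-1)`, there are positive rationals `α`, `β` with these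
valuations, and `|A|/α`, `B/β` are then `ℓ`-th powers of positive rationals; as `ℓ` is odd, the
sign of `A` can be moved into `y₁`. If `A = 0` one takes `y₁ = 0`, and `4B = d² - 1` shows that
the valuations of `B` itself occur as second coordinates in the `T_q`.
-/

/-- The set `T_q` of pairs of valuations occurring in the descent for exponents `ℓ ≥ 5`,
associated to an integer `d` and a prime `q`.  Here `μ = ord_q(d²−1)` and `ν = ord_q(d)`. -/
def descentSet (d : ℤ) (q : ℕ) : Set (ℤ × ℤ) :=
  let μ : ℤ := (padicValInt q (d ^ 2 - 1) : ℤ)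
  let ν : ℤ := (padicValInt q d : ℤ)
  if ¬ ((q : ℤ) ∣ d * (d ^ 2 - 1)) then {(0, 0)}
  else if q = 2 then
    if (2 : ℤ) ∣ d then {(0, 1 - ν)}
    else if 2 ∣ μ then {(1, 0), (μ / 2, 1 - μ / 2), (3 - μ, μ - 2)}
    else {(1, 0), (3 - μ, μ - 2)}
  else if (q : ℤ) ∣ d then {(-ν, 0), (0, -ν)}
  else if 2 ∣ μ then {(0, 0), (-μ, μ), (μ / 2, -μ / 2)}
  else {(0, 0), (-μ, μ)}

lemma padicValRat_two {q : ℕ} (hq : q.Prime) : padicValRat q 2 = if q = 2 then 1 else 0 := by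
  have := Fact.mk hq
  split_ifs with hq2
  · subst hq2; simpa using padicValRat.self (p := 2) one_lt_two
  · rw [← Nat.cast_ofNat, padicValRat.of_nat, padicValNat_primes hq2, Nat.cast_zero]

lemma padicValRat_finset_prod {p : ℕ} [Fact p.Prime] {ι : Type*} (s : Finset ι) {f : ι → ℚ}
    (hf : ∀ i ∈ s, f i ≠ 0) : padicValRat p (∏ i ∈ s, f i) = ∑ i ∈ s, padicValRat p (f i) := by
  classical
  induction s using Finset.induction_on with
  | empty => simp
  | insert i s hi ih =>
    have hs : ∀ j ∈ s, f j ≠ 0 := fun j hj => hf j (Finset.mem_insert_of_mem hj)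
    rw [Finset.prod_insert hi, Finset.sum_insert hi,
      padicValRat.mul (hf i (Finset.mem_insert_self i s)) (Finset.prod_ne_zero_iff.2 hs), ih hs]

lemma exists_pos_padicValRat_eq {N : ℤ} (hN : N ≠ 0) (t : ℕ → ℤ)
    (ht : ∀ q : ℕ, q.Prime → ¬ (q : ℤ) ∣ N → t q = 0) :
    ∃ α : ℚ, 0 < α ∧ ∀ q, q.Prime → padicValRat q α = t q := by
  have hS {p : ℕ} (hp : p ∈ N.natAbs.primeFactors) : p.Prime := Nat.prime_of_mem_primeFactors hp
  refine ⟨∏ p ∈ N.natAbs.primeFactors, (p : ℚ) ^ t p,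
    Finset.prod_pos fun p hp => zpow_pos (by exact_mod_cast (hS hp).pos) _, fun q hq => ?_⟩
  have := Fact.mk hq
  have hval (p : ℕ) (hp : p ∈ N.natAbs.primeFactors) :
      padicValRat q ((p : ℚ) ^ t p) = if p = q then t p else 0 := by
    have := Fact.mk (hS hp)
    rw [padicValRat.zpow, padicValRat.of_nat]
    split_ifs with hpq
    · simp [hpq]
    · simp [padicValNat_primes (Ne.symm hpq)]
  rw [padicValRat_finset_prod _ fun p hp => zpow_ne_zero _ (by exact_mod_cast (hS hp).ne_zero),
    Finset.sum_congr rfl hval, Finset.sum_ite_eq']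
  split_ifs with hqN
  · rfl
  · exact (ht q hq fun h => hqN (Nat.mem_primeFactors.2
      ⟨hq, Int.natCast_dvd.1 h, Int.natAbs_ne_zero.2 hN⟩)).symm

lemma exists_pos_padicValRat_eq_and_eq_mul_pow {ℓ : ℕ} (hℓ : Odd ℓ) {A N : ℤ} (hA : A ≠ 0)
    (hN : N ≠ 0) (t : ℕ → ℤ) (ht : ∀ q : ℕ, q.Prime → ¬ (q : ℤ) ∣ N → t q = 0)
    (hdvd : ∀ q, q.Prime → (ℓ : ℤ) ∣ padicValInt q A - t q) :
    ∃ α : ℚ, 0 < α ∧ (∀ q, q.Prime → padicValRat q α = t q) ∧ ∃ y : ℚ, (A : ℚ) = α * y ^ ℓ := by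
  obtain ⟨z, hz, hzv⟩ := exists_pos_padicValRat_eq (mul_ne_zero hN hA)
    (fun q => (padicValInt q A - t q) / ℓ) fun q hq hqN => by
      rw [ht q hq fun h => hqN (h.mul_right A),
        padicValInt.eq_zero_of_not_dvd fun h => hqN (h.mul_left N)]
      simp
  refine ⟨|(A : ℚ)| / z ^ ℓ, by positivity, fun q hq => ?_, ?_⟩
  · have := Fact.mk hq
    rw [padicValRat.div (by positivity) (by positivity), padicValRat.pow, hzv q hq,
      Int.mul_ediv_cancel' (hdvd q hq), ← Int.cast_abs, padicValRat.of_int]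
    simp [padicValInt, Int.natAbs_abs]
  · rcases abs_choice (A : ℚ) with h | h
    · exact ⟨z, by rw [h]; field_simp⟩
    · exact ⟨-z, by rw [h, hℓ.neg_pow]; field_simp⟩

lemma Nat.Prime.dvd_of_dvd_three_mul {ℓ : ℕ} (hℓ : ℓ.Prime) (hℓ3 : ℓ ≠ 3) {a : ℤ}
    (h : (ℓ : ℤ) ∣ 3 * a) : (ℓ : ℤ) ∣ a := by
  refine (Int.Prime.dvd_mul' hℓ h).resolve_left fun h3 => hℓ3 ?_
  exact (Nat.prime_dvd_prime_iff_eq hℓ Nat.prime_three).1 (by exact_mod_cast h3)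

lemma Nat.Prime.not_dvd_sq_sub_one_of_dvd {q : ℕ} (hq : q.Prime) {d : ℤ} (h : (q : ℤ) ∣ d) :
    ¬ (q : ℤ) ∣ d ^ 2 - 1 := by
  intro h'
  have : (q : ℤ) ∣ 1 := by simpa using _root_.dvd_sub (dvd_pow h two_ne_zero) h'
  exact hq.not_dvd_one (by exact_mod_cast this)

lemma Int.two_dvd_mul_sq_sub_one (d : ℤ) : 2 ∣ d * (d ^ 2 - 1) :=
  (Int.even_mul_succ_self d).two_dvd.trans ⟨d - 1, by ring⟩

lemma four_mul_sum_cubes_quadratic (d x : ℤ) :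
    4 * (x ^ 2 + (d + 1) * x + d * (d + 1) / 2) = (2 * x + d + 1) ^ 2 + (d ^ 2 - 1) := by
  have := Int.ediv_mul_cancel (Int.even_mul_succ_self d).two_dvd
  linear_combination 2 * this

section descentSet

variable {d : ℤ} {q : ℕ}

lemma descentSet_of_not_dvd (h : ¬ (q : ℤ) ∣ d * (d ^ 2 - 1)) : descentSet d q = {(0, 0)} := by
  simp [descentSet, h]

lemma mem_descentSet_two_of_two_dvd (h : 2 ∣ d) :
    ((0 : ℤ), 1 - (padicValInt 2 d : ℤ)) ∈ descentSet d 2 := by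
  simp [descentSet, h, Int.two_dvd_mul_sq_sub_one]

lemma mem_descentSet_two_of_not_two_dvd (h : ¬ 2 ∣ d) :
    ((1 : ℤ), (0 : ℤ)) ∈ descentSet d 2 ∧
    ((3 - padicValInt 2 (d ^ 2 - 1) : ℤ), (padicValInt 2 (d ^ 2 - 1) - 2 : ℤ)) ∈ descentSet d 2 ∧
    (2 ∣ (padicValInt 2 (d ^ 2 - 1) : ℤ) →
      ((padicValInt 2 (d ^ 2 - 1) / 2 : ℤ), (1 - padicValInt 2 (d ^ 2 - 1) / 2 : ℤ)) ∈
        descentSet d 2) := by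
  simp only [descentSet, Nat.cast_ofNat, Int.two_dvd_mul_sq_sub_one, h]
  split_ifs <;> simp_all

lemma mem_descentSet_of_not_dvd_sq_sub_one (hq : q.Prime) (hq2 : q ≠ 2)
    (hqD : ¬ (q : ℤ) ∣ d ^ 2 - 1) :
    (-(padicValInt q d : ℤ), (0 : ℤ)) ∈ descentSet d q ∧
    ((0 : ℤ), -(padicValInt q d : ℤ)) ∈ descentSet d q := by
  by_cases hqd : (q : ℤ) ∣ d
  · simp [descentSet, hqd.mul_right, hq2, hqd]
  · have hqN : ¬ (q : ℤ) ∣ d * (d ^ 2 - 1) := fun h => (Int.Prime.dvd_mul' hq h).elim hqd hqD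
    simp [padicValInt.eq_zero_of_not_dvd hqd, descentSet_of_not_dvd hqN]

lemma mem_descentSet_of_dvd_sq_sub_one (hq : q.Prime) (hq2 : q ≠ 2) (hqD : (q : ℤ) ∣ d ^ 2 - 1) :
    ((0 : ℤ), (0 : ℤ)) ∈ descentSet d q ∧
    (-(padicValInt q (d ^ 2 - 1) : ℤ), (padicValInt q (d ^ 2 - 1) : ℤ)) ∈ descentSet d q ∧
    (2 ∣ (padicValInt q (d ^ 2 - 1) : ℤ) →
      ((padicValInt q (d ^ 2 - 1) / 2 : ℤ), (-padicValInt q (d ^ 2 - 1) / 2 : ℤ)) ∈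
        descentSet d q) := by
  have hqd : ¬ (q : ℤ) ∣ d := fun h => hq.not_dvd_sq_sub_one_of_dvd h hqD
  simp only [descentSet, hqD.mul_left, hq2, hqd]
  split_ifs <;> simp_all

end descentSet

section localDescent

variable {d : ℤ} {ℓ : ℕ} {a b w : ℤ}

lemma exists_mem_descentSet_two (hℓ : ℓ.Prime) (hℓ3 : ℓ ≠ 3) (ha : 0 ≤ a) (hb : 0 ≤ b)
    (hsum : padicValInt 2 d + a + b = 1 + ℓ * w)
    (hlt : 2 * a < padicValInt 2 (d ^ 2 - 1) → b + 2 = 2 * a)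
    (hgt : (padicValInt 2 (d ^ 2 - 1) : ℤ) < 2 * a → b + 2 = padicValInt 2 (d ^ 2 - 1)) :
    ∃ t ∈ descentSet d 2, (ℓ : ℤ) ∣ a - t.1 ∧ (ℓ : ℤ) ∣ b - t.2 := by
  by_cases h2d : 2 ∣ d
  · have hμ : padicValInt 2 (d ^ 2 - 1) = 0 :=
      padicValInt.eq_zero_of_not_dvd (Nat.prime_two.not_dvd_sq_sub_one_of_dvd h2d)
    have ha0 : a = 0 := by
      by_contra ha0
      have := hgt (by omega)
      omega
    exact ⟨_, mem_descentSet_two_of_two_dvd h2d, by simp [ha0], ⟨w, by dsimp only; linarith⟩⟩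
  · obtain ⟨h10, hgtmem, heqmem⟩ := mem_descentSet_two_of_not_two_dvd h2d
    rw [padicValInt.eq_zero_of_not_dvd h2d, Nat.cast_zero, zero_add] at hsum
    rcases lt_trichotomy (2 * a) (padicValInt 2 (d ^ 2 - 1)) with h | h | h
    · have hℓa : (ℓ : ℤ) ∣ a - 1 := hℓ.dvd_of_dvd_three_mul hℓ3 ⟨w, by linarith [hlt h]⟩
      have hb : b - 0 = 2 * (a - 1) := by linarith [hlt h]
      exact ⟨_, h10, hℓa, hb ▸ dvd_mul_of_dvd_right hℓa 2⟩
    · refine ⟨_, heqmem ⟨a, h.symm⟩, ⟨0, ?_⟩, ⟨w, ?_⟩⟩ <;> simp only [← h] <;> omega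
    · exact ⟨_, hgtmem, ⟨w, by linarith [hgt h]⟩, ⟨0, by linarith [hgt h]⟩⟩

lemma exists_mem_descentSet_of_ne_two (hℓ : ℓ.Prime) (hℓ3 : ℓ ≠ 3) {q : ℕ} (hq : q.Prime)
    (hq2 : q ≠ 2) (ha : 0 ≤ a)
    (hsum : padicValInt q d + a + b = ℓ * w)
    (hlt : 2 * a < padicValInt q (d ^ 2 - 1) → b = 2 * a)
    (hgt : (padicValInt q (d ^ 2 - 1) : ℤ) < 2 * a → b = padicValInt q (d ^ 2 - 1)) :
    ∃ t ∈ descentSet d q, (ℓ : ℤ) ∣ a - t.1 ∧ (ℓ : ℤ) ∣ b - t.2 := by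
  by_cases hqD : (q : ℤ) ∣ d ^ 2 - 1
  · obtain ⟨h00, hgtmem, heqmem⟩ := mem_descentSet_of_dvd_sq_sub_one hq hq2 hqD
    rw [padicValInt.eq_zero_of_not_dvd fun h => hq.not_dvd_sq_sub_one_of_dvd h hqD,
      Nat.cast_zero, zero_add] at hsum
    rcases lt_trichotomy (2 * a) (padicValInt q (d ^ 2 - 1)) with h | h | h
    · have hℓa : (ℓ : ℤ) ∣ a := hℓ.dvd_of_dvd_three_mul hℓ3 ⟨w, by linarith [hlt h]⟩
      have hb : b - 0 = 2 * a := by linarith [hlt h]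
      exact ⟨_, h00, by simpa using hℓa, hb ▸ dvd_mul_of_dvd_right hℓa 2⟩
    · refine ⟨_, heqmem ⟨a, h.symm⟩, ⟨0, ?_⟩, ⟨w, ?_⟩⟩ <;> simp only [← h] <;> omega
    · exact ⟨_, hgtmem, ⟨w, by linarith [hgt h]⟩, ⟨0, by linarith [hgt h]⟩⟩
  · rw [padicValInt.eq_zero_of_not_dvd hqD, Nat.cast_zero] at hgt
    have hmem := mem_descentSet_of_not_dvd_sq_sub_one hq hq2 hqD
    rcases ha.eq_or_lt with rfl | ha
    · exact ⟨_, hmem.2, by simp, ⟨w, by linarith⟩⟩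
    · have hb : b = 0 := hgt (by linarith)
      exact ⟨_, hmem.1, ⟨w, by linarith⟩, by simp [hb]⟩

end localDescent

lemma exists_mem_descentSet {d A B y : ℤ} {ℓ q : ℕ} (hℓ : ℓ.Prime) (hℓ3 : ℓ ≠ 3) (hq : q.Prime)
    (hN : d * (d ^ 2 - 1) ≠ 0) (hA : A ≠ 0) (hB : B ≠ 0)
    (h4 : 4 * B = A ^ 2 + (d ^ 2 - 1)) (h : d * A * B = 2 * y ^ ℓ) :
    ∃ t ∈ descentSet d q, (ℓ : ℤ) ∣ padicValInt q A - t.1 ∧ (ℓ : ℤ) ∣ padicValInt q B - t.2 := by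
  have := Fact.mk hq
  obtain ⟨hd, hD⟩ := mul_ne_zero_iff.1 hN
  have hy : y ≠ 0 := by rintro rfl; simp [hd, hA, hB, hℓ.ne_zero] at h
  -- kept opaque so that cast normalisation leaves `((D : ℤ) : ℚ)` intact for `padicValRat.of_int`
  set D := d ^ 2 - 1
  have hsum : (padicValInt q d + padicValInt q A + padicValInt q B : ℤ) =
      padicValRat q 2 + ℓ * padicValInt q y := by
    have := congrArg (padicValRat q) (show (d : ℚ) * A * B = 2 * (y : ℚ) ^ ℓ by exact_mod_cast h)
    rw [padicValRat.mul (by simp [hd, hA]) (by simpa), padicValRat.mul (by simpa) (by simpa),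
      padicValRat.mul two_ne_zero (pow_ne_zero _ (by simpa)), padicValRat.pow] at this
    simpa only [padicValRat.of_int] using this
  have hsq : padicValRat q ((A : ℚ) ^ 2 + D) = 2 * padicValRat q 2 + padicValInt q B := by
    rw [← show (2 : ℚ) ^ 2 * B = (A : ℚ) ^ 2 + D by exact_mod_cast h4,
      padicValRat.mul (by norm_num) (by simpa), padicValRat.pow, padicValRat.of_int]
    push_cast; ring
  have hsq0 : (A : ℚ) ^ 2 + D ≠ 0 := by exact_mod_cast h4 ▸ mul_ne_zero four_ne_zero hB
  have hA2 : padicValRat q ((A : ℚ) ^ 2) = 2 * padicValInt q A := by simp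
  have hlt (h : 2 * (padicValInt q A : ℤ) < padicValInt q D) :
      padicValRat q ((A : ℚ) ^ 2 + D) = 2 * padicValInt q A := by
    rw [padicValRat.add_eq_of_lt hsq0 (by simpa) (by simpa) (by simpa [hA2]), hA2]
  have hgt (h : (padicValInt q D : ℤ) < 2 * padicValInt q A) :
      padicValRat q ((A : ℚ) ^ 2 + D) = padicValInt q D := by
    rw [add_comm] at hsq0 ⊢
    rw [padicValRat.add_eq_of_lt hsq0 (by simpa) (by simpa) (by simpa [hA2]), padicValRat.of_int]
  rw [padicValRat_two hq] at hsum hsq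
  rcases eq_or_ne q 2 with rfl | hq2
  · rw [if_pos rfl] at hsum hsq
    exact exists_mem_descentSet_two hℓ hℓ3 (by positivity) (by positivity) hsum
      (fun h => by linarith [hlt h]) (fun h => by linarith [hgt h])
  · simp only [if_neg hq2, zero_add, mul_zero] at hsum hsq
    exact exists_mem_descentSet_of_ne_two hℓ hℓ3 hq hq2 (by positivity) hsum
      (fun h => by linarith [hlt h]) (fun h => by linarith [hgt h])

lemma exists_mem_descentSet_of_four_mul_eq {d B : ℤ} {q : ℕ} (hq : q.Prime) (hB : B ≠ 0)
    (h4 : 4 * B = d ^ 2 - 1) : ∃ t ∈ descentSet d q, t.2 = padicValInt q B := by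
  have := Fact.mk hq
  have hval : padicValInt q B + 2 * padicValRat q 2 = padicValInt q (d ^ 2 - 1) := by
    have h4q : (2 : ℚ) ^ 2 * B = ((d ^ 2 - 1 : ℤ) : ℚ) := by rw [← h4]; push_cast; ring
    have := congrArg (padicValRat q) h4q
    rw [padicValRat.mul (by norm_num) (by exact_mod_cast hB), padicValRat.pow] at this
    simp only [padicValRat.of_int] at this
    push_cast at this
    linarith
  rw [padicValRat_two hq] at hval
  rcases eq_or_ne q 2 with rfl | hq2
  · rw [if_pos rfl, mul_one] at hval
    have h2d : ¬ 2 ∣ d := fun h2d => by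
      rw [padicValInt.eq_zero_of_not_dvd (Nat.prime_two.not_dvd_sq_sub_one_of_dvd h2d)] at hval
      omega
    exact ⟨_, (mem_descentSet_two_of_not_two_dvd h2d).2.1, by dsimp only; omega⟩
  · rw [if_neg hq2, mul_zero, add_zero] at hval
    by_cases hqD : (q : ℤ) ∣ d ^ 2 - 1
    · exact ⟨_, (mem_descentSet_of_dvd_sq_sub_one hq hq2 hqD).2.1, hval.symm⟩
    · rw [padicValInt.eq_zero_of_not_dvd hqD, Nat.cast_zero] at hval
      exact ⟨_, (mem_descentSet_of_not_dvd_sq_sub_one hq hq2 hqD).1, hval.symm⟩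

lemma exists_descent_of_forall_prime {d A B : ℤ} {ℓ : ℕ} (hℓ : Odd ℓ)
    (hN : d * (d ^ 2 - 1) ≠ 0) (hB : B ≠ 0) (t : ℕ → ℤ × ℤ)
    (ht : ∀ q, q.Prime → t q ∈ descentSet d q)
    (htA : A ≠ 0 → ∀ q, q.Prime → (ℓ : ℤ) ∣ padicValInt q A - (t q).1)
    (htB : ∀ q, q.Prime → (ℓ : ℤ) ∣ padicValInt q B - (t q).2) :
    ∃ α β : ℚ, 0 < α ∧ 0 < β ∧
      (∀ q : ℕ, q.Prime → (padicValRat q α, padicValRat q β) ∈ descentSet d q) ∧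
      ∃ y₁ y₂ : ℚ, (A : ℚ) = α * y₁ ^ ℓ ∧ (B : ℚ) = β * y₂ ^ ℓ := by
  have hsupp (q : ℕ) (hq : q.Prime) (hqN : ¬ (q : ℤ) ∣ d * (d ^ 2 - 1)) : t q = (0, 0) := by
    simpa [descentSet_of_not_dvd hqN] using ht q hq
  obtain ⟨β, hβ, hβv, y₂, hy₂⟩ := exists_pos_padicValRat_eq_and_eq_mul_pow hℓ hB hN
    (fun q => (t q).2) (fun q hq hqN => by simp [hsupp q hq hqN]) htB
  obtain ⟨α, hα, hαv, y₁, hy₁⟩ : ∃ α : ℚ, 0 < α ∧ (∀ q, q.Prime → padicValRat q α = (t q).1) ∧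
      ∃ y₁ : ℚ, (A : ℚ) = α * y₁ ^ ℓ := by
    have hsupp₁ (q : ℕ) (hq : q.Prime) (hqN : ¬ (q : ℤ) ∣ d * (d ^ 2 - 1)) : (t q).1 = 0 := by
      simp [hsupp q hq hqN]
    rcases eq_or_ne A 0 with rfl | hA
    · obtain ⟨α, hα, hαv⟩ := exists_pos_padicValRat_eq hN (fun q => (t q).1) hsupp₁
      exact ⟨α, hα, hαv, 0, by simp [hℓ.pos.ne']⟩
    · exact exists_pos_padicValRat_eq_and_eq_mul_pow hℓ hA hN _ hsupp₁ (htA hA)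
  refine ⟨α, β, hα, hβ, fun q hq => ?_, y₁, y₂, hy₁, hy₂⟩
  rw [hαv q hq, hβv q hq]
  exact ht q hq

/-- Descent for exponents `ℓ ≥ 5`: if `d ≥ 3`, `ℓ ≥ 5` is prime and the integers `x`, `y`
satisfy `d(2x+d+1)(x² + (d+1)x + d(d+1)/2) = 2yˡ`, then there are positive rationals
`α`, `β` with `(ord_q(α), ord_q(β)) ∈ T_q` for every prime `q`, and rationals `y₁`, `y₂`,
such that `2x+d+1 = α y₁ˡ` and `x² + (d+1)x + d(d+1)/2 = β y₂ˡ`. -/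
theorem descent_ell_ge_five (d : ℤ) (hd : 3 ≤ d) (ℓ : ℕ) (hℓ : ℓ.Prime) (h5 : 5 ≤ ℓ)
    (x y : ℤ)
    (h : d * (2 * x + d + 1) * (x ^ 2 + (d + 1) * x + d * (d + 1) / 2) = 2 * y ^ ℓ) :
    ∃ α β : ℚ, 0 < α ∧ 0 < β ∧
      (∀ q : ℕ, q.Prime → (padicValRat q α, padicValRat q β) ∈ descentSet d q) ∧
      ∃ y₁ y₂ : ℚ,
        ((2 * x + d + 1 : ℤ) : ℚ) = α * y₁ ^ ℓ ∧
        ((x ^ 2 + (d + 1) * x + d * (d + 1) / 2 : ℤ) : ℚ) = β * y₂ ^ ℓ := by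
  have h4 := four_mul_sum_cubes_quadratic d x
  set A := 2 * x + d + 1
  set B := x ^ 2 + (d + 1) * x + d * (d + 1) / 2
  have hN : d * (d ^ 2 - 1) ≠ 0 := mul_ne_zero (by omega) (by nlinarith)
  have hB : B ≠ 0 := by nlinarith
  have hℓ3 : ℓ ≠ 3 := by omega
  have hloc (q : ℕ) : ∃ t : ℤ × ℤ, q.Prime → t ∈ descentSet d q ∧
      (A ≠ 0 → (ℓ : ℤ) ∣ padicValInt q A - t.1) ∧ (ℓ : ℤ) ∣ padicValInt q B - t.2 := by
    by_cases hq : q.Prime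
    · rcases eq_or_ne A 0 with hA | hA
      · obtain ⟨t, ht, htB⟩ :=
          exists_mem_descentSet_of_four_mul_eq hq hB (by rw [h4, hA]; ring)
        exact ⟨t, fun _ => ⟨ht, fun hA' => absurd hA hA', by simp [htB]⟩⟩
      · obtain ⟨t, ht, htA, htB⟩ := exists_mem_descentSet hℓ hℓ3 hq hN hA hB h4 h
        exact ⟨t, fun _ => ⟨ht, fun _ => htA, htB⟩⟩
    · exact ⟨0, fun h => absurd h hq⟩
  choose t ht using hloc
  exact exists_descent_of_forall_prime (hℓ.odd_of_ne_two (by omega)) hN hB t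
    (fun q hq => (ht q hq).1) (fun hA q hq => (ht q hq).2.1 hA) fun q hq => (ht q hq).2.2
end

section
/- Let ℓ ≥ 3 be prime, let r, s, t be positive integers with gcd(r,s,t) = 1, and let q = 2kℓ + 1 be a prime (k a positive integer) that does not divide r. Suppose that for every ζ ∈ 𝔽_q of the form ζ = η²ˡ for some η ∈ 𝔽_q, the element ((sζ + t)/r)²ᵏ ∈ 𝔽_q is neither 0 nor 1. Then the equation r y₂ˡ − s y₁²ˡ = t has no solutions in integers y₁, y₂. -/
/-- Criterion for the non-existence of solutions to `r y₂ˡ − s y₁²ˡ = t`: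
if `ℓ ≥ 3` is prime, `r`, `s`, `t` are positive coprime integers, and `q = 2kℓ + 1` is a
prime not dividing `r` such that for every `(2ℓ)`-th power `ζ = η²ˡ` in `𝔽_q` the element
`((sζ + t)/r)²ᵏ` is neither `0` nor `1`, then the equation has no integral solutions.
(Since `q ∤ r`, division by `r` in `𝔽_q` is multiplication by `r⁻¹`.) -/
theorem criterion_no_solutions (ℓ : ℕ) (hℓ : ℓ.Prime) (h3 : 3 ≤ ℓ)
    (r s t : ℕ) (hr : 0 < r) (hs : 0 < s) (ht : 0 < t)
    (hgcd : Nat.gcd r (Nat.gcd s t) = 1)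
    (k : ℕ) (hk : 0 < k) (q : ℕ) (hq : q.Prime) (hqk : q = 2 * k * ℓ + 1)
    (hqr : ¬ q ∣ r)
    (hB : ∀ η : ZMod q,
      (((s : ZMod q) * η ^ (2 * ℓ) + (t : ZMod q)) * (r : ZMod q)⁻¹) ^ (2 * k) ≠ 0 ∧
      (((s : ZMod q) * η ^ (2 * ℓ) + (t : ZMod q)) * (r : ZMod q)⁻¹) ^ (2 * k) ≠ 1) :
    ¬ ∃ y₁ y₂ : ℤ, (r : ℤ) * y₂ ^ ℓ - (s : ℤ) * y₁ ^ (2 * ℓ) = (t : ℤ) := by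
  haveI : Fact q.Prime := ⟨hq⟩
  rintro ⟨y₁, y₂, h⟩
  have hrq : (r : ZMod q) ≠ 0 := by
    simpa [ZMod.natCast_eq_zero_iff] using hqr
  -- reduce the equation mod q
  have hmod : (r : ZMod q) * (y₂ : ZMod q) ^ ℓ - (s : ZMod q) * (y₁ : ZMod q) ^ (2 * ℓ)
      = (t : ZMod q) := by
    have := congrArg (fun z : ℤ => (z : ZMod q)) h
    push_cast at this
    exact this
  have key : ((s : ZMod q) * (y₁ : ZMod q) ^ (2 * ℓ) + (t : ZMod q)) * (r : ZMod q)⁻¹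
      = (y₂ : ZMod q) ^ ℓ := by
    have h1 : (s : ZMod q) * (y₁ : ZMod q) ^ (2 * ℓ) + (t : ZMod q)
        = (r : ZMod q) * (y₂ : ZMod q) ^ ℓ := by linear_combination -hmod
    rw [h1, mul_comm (r : ZMod q), mul_assoc, ZMod.mul_inv_of_unit _ (Ne.isUnit hrq), mul_one]
  obtain ⟨hB0, hB1⟩ := hB (y₁ : ZMod q)
  rw [key] at hB0 hB1
  have hq1 : q - 1 = ℓ * (2 * k) := by rw [hqk, Nat.add_sub_cancel]; ring
  have hpow : ((y₂ : ZMod q) ^ ℓ) ^ (2 * k) = (y₂ : ZMod q) ^ (q - 1) := by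
    rw [← pow_mul, hq1]
  by_cases hy : (y₂ : ZMod q) = 0
  · exact hB0 (by rw [hpow, hy, zero_pow (Nat.sub_ne_zero_of_lt hq.one_lt)])
  · exact hB1 (by rw [hpow, ZMod.pow_card_sub_one_eq_one hy])
end

section
/- Let d ≥ 3 be an integer. For each prime q set μ_q = ord_q(d²−1) and ν_q = ord_q(d), write [m] for the element of {0,1,2} congruent to m modulo 3, and define the finite set T_q ⊂ {0,1,2}² as follows: if q ∤ d(d²−1) then T_q = {(0,0)}; if q = 2 and 2 ∣ d then T_2 = {(0, [1−ν₂])}; if q = 2, 2 ∤ d and μ₂ ≥ 4 then T_2 = {(1,0), (0,1), (2,2)}; if q = 2, 2 ∤ d and μ₂ = 3 then T_2 = {(1,0), (0,1)}; if q is odd and q ∣ d then T_q = {([−ν_q], 0), (0, [−ν_q])}; if q is odd and q ∣ (d²−1) then T_q = {(0,0), (1,2), (2,1)} when μ_q ≥ 2 and T_q = {(0,0), (2,1)} when μ_q = 1. Suppose x, y are integers with d(2x+d+1)(x² + (d+1)x + d(d+1)/2) = 2y³. Then there exist positive integers α, β satisfying (ord_q(α), ord_q(β)) ∈ T_q for every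 prime q, and integers y₁, y₂, such that 2x+d+1 = α y₁³ and x² + (d+1)x + d(d+1)/2 = β y₂³. -/
/-- The set `T_q ⊂ {0,1,2}²` occurring in the descent for exponent `3`, associated to an
integer `d` and a prime `q`.  Here `μ = ord_q(d²−1)`, `ν = ord_q(d)`, and `[m]` denotes the
element of `{0,1,2}` congruent to `m` modulo `3`. -/
def descentSetCubes (d : ℤ) (q : ℕ) : Set (ℕ × ℕ) :=
  let μ : ℕ := padicValInt q (d ^ 2 - 1)
  let ν : ℕ := padicValInt q d
  if ¬ ((q : ℤ) ∣ d * (d ^ 2 - 1)) then {(0, 0)}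
  else if q = 2 then
    if (2 : ℤ) ∣ d then {(0, ((1 - (ν : ℤ)) % 3).toNat)}
    else if 4 ≤ μ then {(1, 0), (0, 1), (2, 2)}
    else {(1, 0), (0, 1)}
  else if (q : ℤ) ∣ d then {(((-(ν : ℤ)) % 3).toNat, 0), (0, ((-(ν : ℤ)) % 3).toNat)}
  else if 2 ≤ μ then {(0, 0), (1, 2), (2, 1)}
  else {(0, 0), (2, 1)}

/-!
Write `A = 2x+d+1` and `B = x² + (d+1)x + d(d+1)/2`, so that `A² + (d²−1) = 4B` and `B > 0`.
Take `α`, `β` to be the cube-free parts of `|A|` and `B` (exponents reduced mod `3`), the sign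
of `A` going into `y₁`. At a prime `q`, `dAB = 2y³` gives
`ord_q d + ord_q A + ord_q B ≡ ord_q 2 (mod 3)`, and since `A² + (d²−1) − 4B = 0` the least of
`2 ord_q A`, `μ_q`, `ord_q 4 + ord_q B` is attained twice. With `gcd(d, d²−1) = 1` and
`8 ∣ d²−1` for odd `d`, these two constraints leave only the pairs in `T_q`.
-/

namespace padicValInt

variable {q : ℕ}

theorem neg (x : ℤ) : padicValInt q (-x) = padicValInt q x := by
  simp only [padicValInt, Int.natAbs_neg]

variable [Fact q.Prime]

theorem pow (x : ℤ) (n : ℕ) : padicValInt q (x ^ n) = n * padicValInt q x := by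
  simp only [padicValInt, Int.natAbs_pow, padicValNat.pow]

theorem min_le_add {x y : ℤ} (hxy : x + y ≠ 0) :
    min (padicValInt q x) (padicValInt q y) ≤ padicValInt q (x + y) := by
  have h := padicValRat.min_le_padicValRat_add (p := q) (q := x) (r := y) (by exact_mod_cast hxy)
  simp only [← Int.cast_add, padicValRat.of_int] at h
  exact_mod_cast h

theorem min_le_sub {x y : ℤ} (hxy : x - y ≠ 0) :
    min (padicValInt q x) (padicValInt q y) ≤ padicValInt q (x - y) := by
  rw [sub_eq_add_neg] at hxy ⊢
  simpa only [neg] using min_le_add (q := q) hxy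

theorem pos_iff_dvd {x : ℤ} (hx : x ≠ 0) : 0 < padicValInt q x ↔ (q : ℤ) ∣ x := by
  simpa [hx, Nat.one_le_iff_ne_zero, Nat.pos_iff_ne_zero] using
    (padicValInt_dvd_iff (p := q) 1 x).symm

theorem two : padicValInt q 2 = if q = 2 then 1 else 0 := by
  split_ifs with h
  · subst h; exact padicValInt_self
  · have : Fact (Nat.Prime 2) := ⟨Nat.prime_two⟩
    exact_mod_cast (padicValNat_primes h : padicValNat q 2 = 0)

theorem four_mul {x : ℤ} (hx : x ≠ 0) :
    padicValInt q (4 * x) = 2 * padicValInt q 2 + padicValInt q x := by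
  rw [show (4 : ℤ) = 2 ^ 2 by norm_num, padicValInt.mul (by norm_num) hx, pow]

end padicValInt

theorem Nat.exists_eq_mul_pow_factorization_mod (n k : ℕ) :
    ∃ α m : ℕ, n = α * m ^ k ∧ ∀ p, α.factorization p = n.factorization p % k := by
  have hdvd : Nat.floorRoot k n ^ k ∣ n := Nat.floorRoot_pow_dvd
  refine ⟨n / Nat.floorRoot k n ^ k, Nat.floorRoot k n, (Nat.div_mul_cancel hdvd).symm,
    fun p => ?_⟩
  simp [Nat.factorization_div hdvd, Nat.mod_eq_sub_mul_div]

theorem Int.exists_eq_mul_pow_padicValInt_mod {z : ℤ} (hz : z ≠ 0) {k : ℕ} (hk : Odd k) :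
    ∃ α m : ℤ, 0 < α ∧ z = α * m ^ k ∧
      ∀ q : ℕ, q.Prime → padicValInt q α = padicValInt q z % k := by
  obtain ⟨α, m, hnat, hfac⟩ := Nat.exists_eq_mul_pow_factorization_mod z.natAbs k
  have hα0 : (0 : ℤ) < α := by
    have : α ≠ 0 := by rintro rfl; simp [hz] at hnat
    omega
  have hval (q : ℕ) (hq : q.Prime) : padicValInt q α = padicValInt q z % k := by
    rw [padicValInt.of_nat, padicValInt, ← Nat.factorization_def _ hq,
      ← Nat.factorization_def _ hq, hfac]
  rcases Int.natAbs_eq z with h | h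
  · exact ⟨α, m, hα0, by rw [h, hnat]; push_cast; ring, hval⟩
  · exact ⟨α, -m, hα0, by rw [h, hnat, hk.neg_pow]; push_cast; ring, hval⟩

section descent

variable {q : ℕ} [Fact q.Prime]

theorem padicValInt_eq_zero_or_padicValInt_sq_sub_one_eq_zero (d : ℤ) :
    padicValInt q d = 0 ∨ padicValInt q (d ^ 2 - 1) = 0 := by
  by_contra! h
  have hd : (q : ℤ) ∣ d := by_contra fun h' => h.1 (padicValInt.eq_zero_of_not_dvd h')
  have hD : (q : ℤ) ∣ d ^ 2 - 1 := by_contra fun h' => h.2 (padicValInt.eq_zero_of_not_dvd h')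
  have h1 : (q : ℤ) ∣ 1 := by
    rw [show (1 : ℤ) = d * d - (d ^ 2 - 1) by ring]
    exact dvd_sub (hd.mul_left d) hD
  exact (Fact.out : q.Prime).not_dvd_one (by exact_mod_cast h1)

theorem three_le_padicValInt_two_sq_sub_one {d : ℤ} (hd : Odd d) (hD : d ^ 2 - 1 ≠ 0) :
    3 ≤ padicValInt 2 (d ^ 2 - 1) :=
  ((padicValInt_dvd_iff 3 _).1 (by simpa using Int.eight_dvd_sq_sub_one_of_odd hd)).resolve_left hD

/-- `h₁`, `h₂`, `h₃` say that the least of `2a`, `ord_q(d²−1)`, `ord_q 4 + b` is attained twice,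
as it is for the valuations of `A²`, `d²−1`, `4B` when `A² + (d²−1) = 4B`. -/
theorem mod_three_mem_descentSetCubes {d : ℤ} (hd : d ≠ 0) (hD : d ^ 2 - 1 ≠ 0) {a b : ℕ}
    (hcube : (padicValInt q d + a + b) % 3 = padicValInt q 2 % 3)
    (h₁ : min (2 * a) (padicValInt q (d ^ 2 - 1)) ≤ 2 * padicValInt q 2 + b)
    (h₂ : min (2 * a) (2 * padicValInt q 2 + b) ≤ padicValInt q (d ^ 2 - 1))
    (h₃ : min (padicValInt q (d ^ 2 - 1)) (2 * padicValInt q 2 + b) ≤ 2 * a) :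
    (a % 3, b % 3) ∈ descentSetCubes d q := by
  have hcop := padicValInt_eq_zero_or_padicValInt_sq_sub_one_eq_zero (q := q) d
  have hdvd : (q : ℤ) ∣ d * (d ^ 2 - 1) ↔
      0 < padicValInt q d ∨ 0 < padicValInt q (d ^ 2 - 1) := by
    rw [(Nat.prime_iff_prime_int.mp Fact.out).dvd_mul, padicValInt.pos_iff_dvd hd,
      padicValInt.pos_iff_dvd hD]
  rw [padicValInt.two] at hcube h₁ h₂ h₃
  simp only [descentSetCubes, hdvd, ← padicValInt.pos_iff_dvd hd]
  rcases eq_or_ne q 2 with rfl | hq2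
  · have hodd : padicValInt 2 d = 0 → 3 ≤ padicValInt 2 (d ^ 2 - 1) := fun h =>
      three_le_padicValInt_two_sq_sub_one (Int.not_even_iff_odd.mp fun he =>
        by simp [padicValInt.eq_zero_iff, he.two_dvd, hd] at h) hD
    have h2d : (2 : ℤ) ∣ d ↔ 0 < padicValInt 2 d := (padicValInt.pos_iff_dvd hd).symm
    simp only [if_true] at hcube h₁ h₂ h₃
    simp only [if_true, h2d]
    split_ifs <;> simp only [Set.mem_insert_iff, Set.mem_singleton_iff, Prod.mk.injEq] <;> omega
  · simp only [hq2, if_false] at hcube h₁ h₂ h₃ ⊢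
    split_ifs <;> simp only [Set.mem_insert_iff, Set.mem_singleton_iff, Prod.mk.injEq] <;> omega

theorem mod_three_mem_descentSetCubes_of_sq_add {d A B y : ℤ} (hd : d ≠ 0) (hD : d ^ 2 - 1 ≠ 0)
    (hA : A ≠ 0) (hB : B ≠ 0) (hsq : A ^ 2 + (d ^ 2 - 1) = 4 * B)
    (hcube : d * A * B = 2 * y ^ 3) :
    (padicValInt q A % 3, padicValInt q B % 3) ∈ descentSetCubes d q := by
  have hy : y ≠ 0 := by rintro rfl; simp [hd, hA, hB] at hcube
  have hv4B := padicValInt.four_mul (q := q) hB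
  have hvA2 : padicValInt q (A ^ 2) = 2 * padicValInt q A := padicValInt.pow A 2
  have hval := congrArg (padicValInt q) hcube
  rw [padicValInt.mul (mul_ne_zero hd hA) hB, padicValInt.mul hd hA,
    padicValInt.mul two_ne_zero (pow_ne_zero 3 hy), padicValInt.pow] at hval
  have e₂ : 4 * B - A ^ 2 = d ^ 2 - 1 := by linear_combination -hsq
  have e₃ : 4 * B - (d ^ 2 - 1) = A ^ 2 := by linear_combination -hsq
  have h₁ := padicValInt.min_le_add (q := q) (hsq ▸ mul_ne_zero four_ne_zero hB)
  have h₂ := padicValInt.min_le_sub (q := q) (e₂ ▸ hD)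
  have h₃ := padicValInt.min_le_sub (q := q) (e₃ ▸ pow_ne_zero 2 hA)
  rw [hsq] at h₁
  rw [e₂] at h₂
  rw [e₃] at h₃
  apply mod_three_mem_descentSetCubes hd hD <;> omega

theorem mod_three_mem_descentSetCubes_of_sq_sub_one_eq {d B : ℤ} (hd : d ≠ 0) (hB : B ≠ 0)
    (hsq : d ^ 2 - 1 = 4 * B) :
    (padicValInt q (2 * (d * B) ^ 2) % 3, padicValInt q B % 3) ∈ descentSetCubes d q := by
  have hv4B := padicValInt.four_mul (q := q) hB
  have hva : padicValInt q (2 * (d * B) ^ 2) =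
      padicValInt q 2 + 2 * (padicValInt q d + padicValInt q B) := by
    rw [padicValInt.mul two_ne_zero (pow_ne_zero 2 (mul_ne_zero hd hB)), padicValInt.pow,
      padicValInt.mul hd hB]
  rw [← hsq] at hv4B
  apply mod_three_mem_descentSetCubes hd (hsq ▸ mul_ne_zero four_ne_zero hB) <;> omega

end descent

/-- Descent for exponent `3`: if `d ≥ 3` and the integers `x`, `y` satisfy
`d(2x+d+1)(x² + (d+1)x + d(d+1)/2) = 2y³`, then there are positive integers `α`, `β` with
`(ord_q(α), ord_q(β)) ∈ T_q` for every prime `q`, and integers `y₁`, `y₂`, such that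
`2x+d+1 = α y₁³` and `x² + (d+1)x + d(d+1)/2 = β y₂³`. -/
theorem descent_ell_eq_three (d : ℤ) (hd : 3 ≤ d) (x y : ℤ)
    (h : d * (2 * x + d + 1) * (x ^ 2 + (d + 1) * x + d * (d + 1) / 2) = 2 * y ^ 3) :
    ∃ α β : ℤ, 0 < α ∧ 0 < β ∧
      (∀ q : ℕ, q.Prime → (padicValInt q α, padicValInt q β) ∈ descentSetCubes d q) ∧
      ∃ y₁ y₂ : ℤ,
        2 * x + d + 1 = α * y₁ ^ 3 ∧
        x ^ 2 + (d + 1) * x + d * (d + 1) / 2 = β * y₂ ^ 3 := by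
  have hd0 : d ≠ 0 := by omega
  have hD : d ^ 2 - 1 ≠ 0 := by nlinarith
  have hhalf : d * (d + 1) / 2 * 2 = d * (d + 1) :=
    Int.ediv_mul_cancel (Int.even_mul_succ_self d).two_dvd
  have hsq : (2 * x + d + 1) ^ 2 + (d ^ 2 - 1) = 4 * (x ^ 2 + (d + 1) * x + d * (d + 1) / 2) := by
    linear_combination -2 * hhalf
  have hB : 0 < x ^ 2 + (d + 1) * x + d * (d + 1) / 2 := by nlinarith
  have hodd : Odd 3 := by decide
  obtain ⟨β, y₂, hβ, hBeq, hβval⟩ := Int.exists_eq_mul_pow_padicValInt_mod hB.ne' hodd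
  by_cases hA : 2 * x + d + 1 = 0
  · -- any `α` fits `A = α * 0 ^ 3`; this one keeps the cube congruence: `d · 2(dB)² · B = 2(dB)³`
    obtain ⟨α, -, hα, -, hαval⟩ := Int.exists_eq_mul_pow_padicValInt_mod
      (z := 2 * (d * (x ^ 2 + (d + 1) * x + d * (d + 1) / 2)) ^ 2) (by positivity) hodd
    refine ⟨α, β, hα, hβ, fun q hq => ?_, 0, y₂, by simp [hA], hBeq⟩
    have := Fact.mk hq
    rw [hαval q hq, hβval q hq]
    exact mod_three_mem_descentSetCubes_of_sq_sub_one_eq hd0 hB.ne' (by simpa [hA] using hsq)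
  · obtain ⟨α, y₁, hα, hAeq, hαval⟩ := Int.exists_eq_mul_pow_padicValInt_mod hA hodd
    refine ⟨α, β, hα, hβ, fun q hq => ?_, y₁, y₂, hAeq, hBeq⟩
    have := Fact.mk hq
    rw [hαval q hq, hβval q hq]
    exact mod_three_mem_descentSetCubes_of_sq_add hd0 hD hA hB.ne' hsq h
end

section
/- Let m be a positive squarefree integer, K = ℚ(√−m) with ring of integers 𝒪, and let ℓ be an odd prime. Let v, n be nonzero integers and ε ∈ K*, and let 𝔮 be a nonzero prime ideal of 𝒪, with ord_𝔮 denoting the 𝔮-adic valuation on K*. Suppose at least one of the following holds: (i) ord_𝔮(v), ord_𝔮(n√−m) and ord_𝔮(ε) are pairwise distinct modulo ℓ; (ii) ord_𝔮(2v), ord_𝔮(ε) and ord_𝔮(ε̄) are pairwise distinct modulo ℓ; (iii) ord_𝔮(2n√−m), ord_𝔮(ε) and ord_𝔮(ε̄) are pairwise distinct modulo ℓ. Then there exist no σ ∈ ℤ and η ∈ K with v σˡ + n√−m = ε ηˡ. -/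
/-- The `𝔮`-adic order of a nonzero element `ξ` of a number field `K`: the exponent of the
prime `𝔮` of the ring of integers of `K` in the fractional ideal generated by `ξ`
(with junk value `0` at `ξ = 0`). -/
noncomputable def adicOrd {K : Type*} [Field K] [NumberField K]
    (𝔮 : IsDedekindDomain.HeightOneSpectrum (NumberField.RingOfIntegers K)) (ξ : K) : ℤ :=
  if h : 𝔮.valuation K ξ = 0 then 0 else - Multiplicative.toAdd (WithZero.unzero h)

/-! The terms `v σˡ`, `ε ηˡ` and, in the conjugate equation, `ε̄ η̄ˡ` have `𝔮`-orders congruent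
mod `ℓ` to those of their coefficients.  Adding or subtracting the equation and its conjugate
gives, in each of the cases (i)–(iii), a relation `a + b = c` whose three terms have orders
congruent to the three given ones; by the ultrametric inequality two of `ord a, ord b, ord c`
coincide.  The only term that may vanish is the one carrying `σˡ`, and then the other two are
equal. -/

open IsDedekindDomain NumberField

section AdicOrd

variable {K : Type*} [Field K] [NumberField K] (𝔮 : HeightOneSpectrum (𝓞 K))

lemma adicOrd_eq_neg_log (ξ : K) : adicOrd 𝔮 ξ = -WithZero.log (𝔮.valuation K ξ) := by
  unfold adicOrd
  split_ifs with h
  · simp [h]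
  · rw [WithZero.toAdd_unzero_eq_log]

lemma adicOrd_mul {x y : K} (hx : x ≠ 0) (hy : y ≠ 0) :
    adicOrd 𝔮 (x * y) = adicOrd 𝔮 x + adicOrd 𝔮 y := by
  simp only [adicOrd_eq_neg_log, map_mul]
  rw [WithZero.log_mul ((Valuation.ne_zero_iff _).mpr hx) ((Valuation.ne_zero_iff _).mpr hy)]
  ring

lemma adicOrd_pow (x : K) (k : ℕ) : adicOrd 𝔮 (x ^ k) = k * adicOrd 𝔮 x := by
  simp only [adicOrd_eq_neg_log, map_pow, WithZero.log_pow, nsmul_eq_mul]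
  ring

lemma adicOrd_neg (x : K) : adicOrd 𝔮 (-x) = adicOrd 𝔮 x := by
  simp only [adicOrd_eq_neg_log, Valuation.map_neg]

lemma adicOrd_mul_pow_modEq {x y : K} {k : ℕ} (h : x * y ^ k ≠ 0) :
    adicOrd 𝔮 (x * y ^ k) ≡ adicOrd 𝔮 x [ZMOD k] := by
  rw [adicOrd_mul 𝔮 (left_ne_zero_of_mul h) (right_ne_zero_of_mul h), adicOrd_pow]
  exact Int.add_mul_emod_self_left _ _ _

lemma adicOrd_eq_or_eq_or_eq_of_add_eq {a b c : K} (h : a + b = c) :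
    adicOrd 𝔮 a = adicOrd 𝔮 b ∨ adicOrd 𝔮 a = adicOrd 𝔮 c ∨ adicOrd 𝔮 b = adicOrd 𝔮 c := by
  simp only [adicOrd_eq_neg_log, neg_inj]
  by_cases hab : 𝔮.valuation K a = 𝔮.valuation K b
  · exact Or.inl (congrArg _ hab)
  · have hmax := Valuation.map_add_of_distinct_val (𝔮.valuation K) hab
    rw [h] at hmax
    rcases max_choice (𝔮.valuation K a) (𝔮.valuation K b) with hm | hm <;> rw [hm] at hmax
    · exact Or.inr (Or.inl (congrArg _ hmax.symm))
    · exact Or.inr (Or.inr (congrArg _ hmax.symm))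

lemma not_pairwise_incongr_of_add_eq {a b c : K} (h : a + b = c) {ℓ α β γ : ℤ}
    (ha : a ≠ 0 → adicOrd 𝔮 a ≡ α [ZMOD ℓ]) (hb : adicOrd 𝔮 b ≡ β [ZMOD ℓ])
    (hc : adicOrd 𝔮 c ≡ γ [ZMOD ℓ]) :
    ¬ (¬ α ≡ β [ZMOD ℓ] ∧ ¬ α ≡ γ [ZMOD ℓ] ∧ ¬ β ≡ γ [ZMOD ℓ]) := by
  rintro ⟨hαβ, hαγ, hβγ⟩
  by_cases ha0 : a = 0
  · rw [ha0, zero_add] at h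
    exact hβγ (hb.symm.trans (h ▸ hc))
  · have ha := ha ha0
    rcases adicOrd_eq_or_eq_or_eq_of_add_eq 𝔮 h with e | e | e
    · exact hαβ (ha.symm.trans (e ▸ hb))
    · exact hαγ (ha.symm.trans (e ▸ hc))
    · exact hβγ (hb.symm.trans (e ▸ hc))

end AdicOrd

theorem valuative_criterion_no_solutions_general
    (m : ℕ) (hm : 0 < m)
    (K : Type*) [Field K] [NumberField K]
    (θ : K) (hθ : θ ^ 2 = -(m : K))
    (conj : K ≃ₐ[ℚ] K) (hconj : conj θ = -θ)
    (ℓ : ℕ)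
    (v n : ℤ) (hn : n ≠ 0)
    (ε : K)
    (𝔮 : IsDedekindDomain.HeightOneSpectrum (NumberField.RingOfIntegers K))
    (hcase :
      ( ¬ adicOrd 𝔮 ((v : K)) ≡ adicOrd 𝔮 ((n : K) * θ) [ZMOD ℓ] ∧
        ¬ adicOrd 𝔮 ((v : K)) ≡ adicOrd 𝔮 ε [ZMOD ℓ] ∧
        ¬ adicOrd 𝔮 ((n : K) * θ) ≡ adicOrd 𝔮 ε [ZMOD ℓ] ) ∨
      ( ¬ adicOrd 𝔮 ((2 * v : ℤ) : K) ≡ adicOrd 𝔮 ε [ZMOD ℓ] ∧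
        ¬ adicOrd 𝔮 ((2 * v : ℤ) : K) ≡ adicOrd 𝔮 (conj ε) [ZMOD ℓ] ∧
        ¬ adicOrd 𝔮 ε ≡ adicOrd 𝔮 (conj ε) [ZMOD ℓ] ) ∨
      ( ¬ adicOrd 𝔮 (2 * (n : K) * θ) ≡ adicOrd 𝔮 ε [ZMOD ℓ] ∧
        ¬ adicOrd 𝔮 (2 * (n : K) * θ) ≡ adicOrd 𝔮 (conj ε) [ZMOD ℓ] ∧
        ¬ adicOrd 𝔮 ε ≡ adicOrd 𝔮 (conj ε) [ZMOD ℓ] ) ) :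
    ¬ ∃ (σ : ℤ) (η : K), (v : K) * (σ : K) ^ ℓ + (n : K) * θ = ε * η ^ ℓ := by
  rintro ⟨σ, η, hsol⟩
  have hsol' : (v : K) * (σ : K) ^ ℓ - (n : K) * θ = conj ε * conj η ^ ℓ := by
    have := congrArg conj hsol
    simp only [map_add, map_mul, map_pow, map_intCast, hconj] at this
    linear_combination this
  have hθ0 : θ ≠ 0 := by
    rintro rfl
    have : (m : K) = 0 := by simpa using hθ.symm
    exact hm.ne' (by exact_mod_cast this)
  have hnθ : (n : K) * θ ≠ 0 := mul_ne_zero (Int.cast_ne_zero.mpr hn) hθ0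
  have hεη : ε * η ^ ℓ ≠ 0 := fun h ↦ hnθ (by
    have h' : conj ε * conj η ^ ℓ = 0 := by simpa using congrArg conj h
    linear_combination (hsol - hsol' + h - h') / 2)
  have hεη' : conj ε * conj η ^ ℓ ≠ 0 := by simpa using (map_ne_zero conj).mpr hεη
  have hord := adicOrd_mul_pow_modEq 𝔮 hεη
  have hord' := adicOrd_mul_pow_modEq 𝔮 hεη'
  rcases hcase with h | h | h
  · exact not_pairwise_incongr_of_add_eq 𝔮 hsol (adicOrd_mul_pow_modEq 𝔮) .rfl hord h
  · exact not_pairwise_incongr_of_add_eq 𝔮 (a := ((2 * v : ℤ) : K) * (σ : K) ^ ℓ)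
      (b := -(ε * η ^ ℓ)) (by push_cast; linear_combination hsol + hsol')
      (adicOrd_mul_pow_modEq 𝔮) (by rwa [adicOrd_neg]) hord' h
  · exact not_pairwise_incongr_of_add_eq 𝔮 (a := 2 * (n : K) * θ) (b := -(ε * η ^ ℓ))
      (c := -(conj ε * conj η ^ ℓ)) (by linear_combination hsol - hsol') (fun _ ↦ .rfl)
      (by rwa [adicOrd_neg]) (by rwa [adicOrd_neg]) h

/-- Valuation criterion ruling out solutions of `v σˡ + n√−m = ε ηˡ` in `K = ℚ(√−m)`:
if, at some prime `𝔮` of the ring of integers of `K`, one of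
(i) `ord_𝔮(v), ord_𝔮(n√−m), ord_𝔮(ε)`,
(ii) `ord_𝔮(2v), ord_𝔮(ε), ord_𝔮(ε̄)`,
(iii) `ord_𝔮(2n√−m), ord_𝔮(ε), ord_𝔮(ε̄)`
is a triple that is pairwise distinct modulo the odd prime `ℓ`, then there are no `σ ∈ ℤ`
and `η ∈ K` with `v σˡ + n√−m = ε ηˡ`.  Here `K = ℚ(√−m)` is presented as a number field
generated over `ℚ` by an element `θ` with `θ² = −m`, and `ε̄` is the image of `ε` under the
nontrivial automorphism `conj` of `K/ℚ` (which sends `θ` to `−θ`). -/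
theorem valuative_criterion_no_solutions
    (m : ℕ) (hm : 0 < m) (hsf : Squarefree m)
    (K : Type*) [Field K] [NumberField K]
    (θ : K) (hθ : θ ^ 2 = -(m : K))
    (hgen : ∀ x : K, ∃ a b : ℚ, x = (a : K) + (b : K) * θ)
    (conj : K ≃ₐ[ℚ] K) (hconj : conj θ = -θ)
    (ℓ : ℕ) (hℓ : ℓ.Prime) (hodd : ℓ ≠ 2)
    (v n : ℤ) (hv : v ≠ 0) (hn : n ≠ 0)
    (ε : K) (hε : ε ≠ 0)
    (𝔮 : IsDedekindDomain.HeightOneSpectrum (NumberField.RingOfIntegers K))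
    (hcase :
      ( ¬ adicOrd 𝔮 ((v : K)) ≡ adicOrd 𝔮 ((n : K) * θ) [ZMOD ℓ] ∧
        ¬ adicOrd 𝔮 ((v : K)) ≡ adicOrd 𝔮 ε [ZMOD ℓ] ∧
        ¬ adicOrd 𝔮 ((n : K) * θ) ≡ adicOrd 𝔮 ε [ZMOD ℓ] ) ∨
      ( ¬ adicOrd 𝔮 ((2 * v : ℤ) : K) ≡ adicOrd 𝔮 ε [ZMOD ℓ] ∧
        ¬ adicOrd 𝔮 ((2 * v : ℤ) : K) ≡ adicOrd 𝔮 (conj ε) [ZMOD ℓ] ∧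
        ¬ adicOrd 𝔮 ε ≡ adicOrd 𝔮 (conj ε) [ZMOD ℓ] ) ∨
      ( ¬ adicOrd 𝔮 (2 * (n : K) * θ) ≡ adicOrd 𝔮 ε [ZMOD ℓ] ∧
        ¬ adicOrd 𝔮 (2 * (n : K) * θ) ≡ adicOrd 𝔮 (conj ε) [ZMOD ℓ] ∧
        ¬ adicOrd 𝔮 ε ≡ adicOrd 𝔮 (conj ε) [ZMOD ℓ] ) ) :
    ¬ ∃ (σ : ℤ) (η : K), (v : K) * (σ : K) ^ ℓ + (n : K) * θ = ε * η ^ ℓ :=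
  valuative_criterion_no_solutions_general m hm K θ hθ conj hconj ℓ v n hn ε 𝔮 hcase
end
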